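/- arXiv:2208.02118 — 3 statements merged into one kernel-verified Lean document; each statement's English description precedes it below -/
import Mathlib

section
/- Let 𝒳 and 𝒴 be non-negative real-valued random variables on a probability space, let α ≥ 0, let n ≥ 1 be a natural number, and let g be a real number with 1 ≤ g ≤ n. Then α^g · E[𝒳^{n−g} · 𝒴] ≤ E[𝒳^n] + α^n · E[𝒴^{n/g}], where the expectations are Lebesgue integrals taking values in [0,∞]. -/
open MeasureTheory ProbabilityTheory Matrix Asymptotics
open scoped ENNReal NNReal Kronecker ProbabilityTheory

noncomputable section

/-!
Pointwise, this is Young's inequality in the form `a^(p-g) b^g ≤ a^p + b^p`, which is the weighted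
AM-GM inequality for `a^p, b^p` with weights `(p-g)/p, g/p`, applied to `a = X`, `b = α Y^(1/g)`.
Integrating, the right-hand side splits because `X^n` is measurable.
-/

namespace Real

theorem rpow_sub_mul_rpow_le_rpow_add_rpow {a b p g : ℝ} (ha : 0 ≤ a) (hb : 0 ≤ b)
    (hg : 0 < g) (hgp : g ≤ p) : a ^ (p - g) * b ^ g ≤ a ^ p + b ^ p := by
  have hp : 0 < p := hg.trans_le hgp
  have hap : 0 ≤ a ^ p := rpow_nonneg ha p
  have hbp : 0 ≤ b ^ p := rpow_nonneg hb p
  have amgm := geom_mean_le_arith_mean2_weighted (div_nonneg (sub_nonneg.2 hgp) hp.le)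
    (div_nonneg hg.le hp.le) hap hbp (by field_simp; ring)
  rw [← rpow_mul ha, ← rpow_mul hb, mul_div_cancel₀ _ hp.ne', mul_div_cancel₀ _ hp.ne'] at amgm
  calc a ^ (p - g) * b ^ g
      ≤ (p - g) / p * a ^ p + g / p * b ^ p := amgm
    _ ≤ a ^ p + b ^ p := by
      gcongr
      · exact mul_le_of_le_one_left hap (div_le_one_of_le₀ (by linarith) hp.le)
      · exact mul_le_of_le_one_left hbp (div_le_one_of_le₀ hgp hp.le)

theorem rpow_mul_rpow_sub_mul_le_rpow_add_mul_rpow_div {α x y p g : ℝ} (hα : 0 ≤ α)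
    (hx : 0 ≤ x) (hy : 0 ≤ y) (hg : 0 < g) (hgp : g ≤ p) :
    α ^ g * (x ^ (p - g) * y) ≤ x ^ p + α ^ p * y ^ (p / g) := by
  have hy' : 0 ≤ y ^ g⁻¹ := rpow_nonneg hy _
  have hb_g : (α * y ^ g⁻¹) ^ g = α ^ g * y := by
    rw [mul_rpow hα hy', ← rpow_mul hy, inv_mul_cancel₀ hg.ne', rpow_one]
  have hb_p : (α * y ^ g⁻¹) ^ p = α ^ p * y ^ (p / g) := by
    rw [mul_rpow hα hy', ← rpow_mul hy, inv_mul_eq_div]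
  calc α ^ g * (x ^ (p - g) * y)
      = x ^ (p - g) * (α * y ^ g⁻¹) ^ g := by rw [hb_g]; ring
    _ ≤ x ^ p + (α * y ^ g⁻¹) ^ p :=
      rpow_sub_mul_rpow_le_rpow_add_rpow hx (mul_nonneg hα hy') hg hgp
    _ = x ^ p + α ^ p * y ^ (p / g) := by rw [hb_p]

end Real

theorem young_moment_inequality_general
    {Ω : Type} [MeasureSpace Ω]
    (X Y : Ω → ℝ) (hXm : Measurable X)
    (hX : ∀ ω, 0 ≤ X ω) (hY : ∀ ω, 0 ≤ Y ω)
    (α : ℝ) (hα : 0 ≤ α) (n : ℕ) (g : ℝ) (hg1 : 1 ≤ g) (hgn : g ≤ n) :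
    ENNReal.ofReal (α ^ g) * ∫⁻ ω, ENNReal.ofReal (X ω ^ ((n : ℝ) - g) * Y ω) ≤
      (∫⁻ ω, ENNReal.ofReal (X ω ^ (n : ℝ))) +
        ENNReal.ofReal (α ^ (n : ℝ)) * ∫⁻ ω, ENNReal.ofReal (Y ω ^ ((n : ℝ) / g)) := by
  have hαpow : ∀ s : ℝ, 0 ≤ α ^ s := Real.rpow_nonneg hα
  calc ENNReal.ofReal (α ^ g) * ∫⁻ ω, ENNReal.ofReal (X ω ^ ((n : ℝ) - g) * Y ω)
      = ∫⁻ ω, ENNReal.ofReal (α ^ g * (X ω ^ ((n : ℝ) - g) * Y ω)) := by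
        simp_rw [ENNReal.ofReal_mul (hαpow g)]
        exact (lintegral_const_mul' _ _ ENNReal.ofReal_ne_top).symm
    _ ≤ ∫⁻ ω, ENNReal.ofReal (X ω ^ (n : ℝ)) +
          ENNReal.ofReal (α ^ (n : ℝ)) * ENNReal.ofReal (Y ω ^ ((n : ℝ) / g)) := by
        refine lintegral_mono fun ω => ?_
        rw [← ENNReal.ofReal_mul (hαpow _),
          ← ENNReal.ofReal_add (Real.rpow_nonneg (hX ω) _)
            (mul_nonneg (hαpow _) (Real.rpow_nonneg (hY ω) _))]
        exact ENNReal.ofReal_le_ofReal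
          (Real.rpow_mul_rpow_sub_mul_le_rpow_add_mul_rpow_div hα (hX ω) (hY ω) (by linarith) hgn)
    _ = _ := by
        rw [lintegral_add_left (hXm.pow_const _).ennreal_ofReal,
          lintegral_const_mul' _ _ ENNReal.ofReal_ne_top]

/-- Young-type inequality for moments: for non-negative random variables `X, Y`,
`α ≥ 0`, `n ≥ 1` and `1 ≤ g ≤ n`, one has `α^g E[X^{n-g} Y] ≤ E[X^n] + α^n E[Y^{n/g}]`. -/
theorem young_moment_inequality
    {Ω : Type} [MeasureSpace Ω] [IsProbabilityMeasure (ℙ : Measure Ω)]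
    (X Y : Ω → ℝ) (hXm : Measurable X) (hYm : Measurable Y)
    (hX : ∀ ω, 0 ≤ X ω) (hY : ∀ ω, 0 ≤ Y ω)
    (α : ℝ) (hα : 0 ≤ α) (n : ℕ) (hn : 1 ≤ n) (g : ℝ) (hg1 : 1 ≤ g) (hgn : g ≤ n) :
    ENNReal.ofReal (α ^ g) * ∫⁻ ω, ENNReal.ofReal (X ω ^ ((n : ℝ) - g) * Y ω) ≤
      (∫⁻ ω, ENNReal.ofReal (X ω ^ (n : ℝ))) +
        ENNReal.ofReal (α ^ (n : ℝ)) * ∫⁻ ω, ENNReal.ofReal (Y ω ^ ((n : ℝ) / g)) :=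
  young_moment_inequality_general X Y hXm hX hY α hα n g hg1 hgn

end
end

section
/- Let P be a self-adjoint non-commutative polynomial in d+q variables, let X = (X_1,…,X_d) be Hermitian N×N complex matrices, let A = (A_1,…,A_q) be N×N complex matrices with the tuple closed under adjoints, let s ∈ {1,…,d}, and let Δ be a Hermitian N×N matrix. Then the map u ↦ exp( i·P(X_1,…,X_{s−1}, X_s + uΔ, X_{s+1},…,X_d, A) ) is differentiable at u = 0 with derivative i ∫₀¹ e^{iα P(X,A)} · ( ∂_s P(X,A) # Δ ) · e^{i(1−α) P(X,A)} dα, where for a monomial M, ∂_s M # Δ := Σ A'(X,A)·Δ·B'(X,A) summed over all decompositions M = A' X_s B' into words A', B', extended linearly to P. -/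
/-!
Duhamel's formula `exp (M + B) - exp M = ∫₀¹ e^{α(M+B)} B e^{(1-α)M} dα` follows by integrating
the derivative `e^{α(M+B)} B e^{(1-α)M}` of `α ↦ e^{α(M+B)} e^{(1-α)M}`. Taking `B = tH`, the
integrand is jointly continuous in `(t, α)`, so the slope of `t ↦ exp (M + tH)` at `0` tends to
`∫₀¹ e^{αM} H e^{(1-α)M} dα`; as `exp` is analytic, this identifies its Fréchet derivative, and
the chain rule reduces the theorem to the derivative of `u ↦ P(…, X_s + uΔ, …)` at `0`. That is
`∂_s P # Δ`: the upper-right block of the block upper-triangular image of `P` under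
`dSharpAux` obeys the Leibniz rule, and induction on `P` finishes.
-/

open MeasureTheory ProbabilityTheory Matrix Asymptotics
open scoped ENNReal NNReal Kronecker ProbabilityTheory

noncomputable section

/-- Square complex matrices of size `N`. -/
abbrev Mat (N : ℕ) := Matrix (Fin N) (Fin N) ℂ

/-- The normalized trace `(1/N) Tr`. -/
def ntr {N : ℕ} (M : Mat N) : ℂ := (N : ℂ)⁻¹ * Matrix.trace M

/-- Evaluation of a non-commutative polynomial in `d + q` variables at the tuple `(Y, A)`. -/
def evalPoly {d q N : ℕ} (Y : Fin d → Mat N) (A : Fin q → Mat N) :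
    FreeAlgebra ℂ (Fin d ⊕ Fin q) →ₐ[ℂ] Mat N :=
  FreeAlgebra.lift ℂ (Sum.elim Y A)

/-- The involution `*` on non-commutative polynomials: it fixes the `X`-variables, permutes
the `Z`-variables according to the pairing `σ`, conjugates scalars and reverses products.
A polynomial `P` is self-adjoint when `polyStar d q σ P = P`. -/
def polyStar (d q : ℕ) (σ : Fin q → Fin q) (P : FreeAlgebra ℂ (Fin d ⊕ Fin q)) :
    FreeAlgebra ℂ (Fin d ⊕ Fin q) :=
  FreeAlgebra.lift ℂ (fun i => FreeAlgebra.ι ℂ (Sum.map id σ i)) (star P)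

/-- Entrywise matrix-valued integral `∫₀¹ f(α) dα`. -/
def mIntegral {ι : Type} (f : ℝ → Matrix ι ι ℂ) : Matrix ι ι ℂ :=
  Matrix.of fun i j => ∫ α in (0:ℝ)..(1:ℝ), f α i j

/-- Auxiliary block-matrix algebra morphism computing `∂_s P # Δ`: the generator `v` is sent
to `[[v, δ_{v = X_s}·Δ], [0, v]]`, so that the upper-right block of the image of a monomial
`M` is `∑_{M = A X_s B} A(X,A')·Δ·B(X,A')`. -/
def dSharpAux {d q N : ℕ} (s : Fin d) (Δ : Mat N) (Y : Fin d → Mat N) (A : Fin q → Mat N) :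
    FreeAlgebra ℂ (Fin d ⊕ Fin q) →ₐ[ℂ] Matrix (Fin N ⊕ Fin N) (Fin N ⊕ Fin N) ℂ :=
  FreeAlgebra.lift ℂ fun v =>
    Matrix.fromBlocks (Sum.elim Y A v) (if v = Sum.inl s then Δ else 0) 0 (Sum.elim Y A v)

/-- `∂_s P(X,A) # Δ = ∑_{M = A' X_s B'} A'(X,A)·Δ·B'(X,A)`, extended linearly in `P`. -/
def dSharp {d q N : ℕ} (s : Fin d) (Δ : Mat N) (Y : Fin d → Mat N) (A : Fin q → Mat N)
    (P : FreeAlgebra ℂ (Fin d ⊕ Fin q)) : Mat N :=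
  (dSharpAux s Δ Y A P).toBlocks₁₂

section Duhamel

open NormedSpace

variable {𝔸 : Type*} [NormedRing 𝔸] [NormedAlgebra ℝ 𝔸] [CompleteSpace 𝔸]

@[fun_prop]
theorem continuous_exp_of_real_algebra : Continuous (exp : 𝔸 → 𝔸) :=
  continuous_iff_continuousAt.2 fun M => (exp_analytic (𝕂 := ℝ) M).continuousAt

theorem exp_add_sub_exp_eq_integral (M B : 𝔸) :
    exp (M + B) - exp M = ∫ α in (0 : ℝ)..1, exp (α • (M + B)) * B * exp ((1 - α) • M) := by
  have hderiv (α : ℝ) : HasDerivAt (fun t : ℝ => exp (t • (M + B)) * exp ((1 - t) • M))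
      (exp (α • (M + B)) * B * exp ((1 - α) • M)) α := by
    have hright : HasDerivAt (fun t : ℝ => exp ((1 - t) • M))
        ((-1 : ℝ) • (exp ((1 - α) • M) * M)) α :=
      (hasDerivAt_exp_smul_const M (1 - α)).scomp α ((hasDerivAt_id α).const_sub 1)
    refine ((hasDerivAt_exp_smul_const (M + B) α).mul hright).congr_deriv ?_
    have hcomm : M * exp ((1 - α) • M) = exp ((1 - α) • M) * M :=
      ((Commute.refl M).smul_right (1 - α)).exp_right.eq
    simp only [neg_one_smul, mul_neg, ← hcomm]
    noncomm_ring
  rw [intervalIntegral.integral_eq_sub_of_hasDerivAt (fun α _ => hderiv α)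
    (Continuous.intervalIntegrable (by fun_prop) 0 1)]
  simp

theorem hasDerivAt_exp_add_smul (M H : 𝔸) :
    HasDerivAt (fun t : ℝ => exp (M + t • H))
      (∫ α in (0 : ℝ)..1, exp (α • M) * H * exp ((1 - α) • M)) 0 := by
  set G : ℝ → 𝔸 := fun t => ∫ α in (0 : ℝ)..1, exp (α • (M + t • H)) * H * exp ((1 - α) • M)
  have hG : Continuous G :=
    intervalIntegral.continuous_parametric_intervalIntegral_of_continuous' (by fun_prop) 0 1
  have hslope : ∀ t ≠ (0 : ℝ), slope (fun t : ℝ => exp (M + t • H)) 0 t = G t := by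
    intro t ht
    rw [slope_def_module, zero_smul, add_zero, sub_zero, exp_add_sub_exp_eq_integral,
      ← intervalIntegral.integral_smul]
    refine intervalIntegral.integral_congr fun α _ => ?_
    simp only [mul_smul_comm, smul_mul_assoc, inv_smul_smul₀ ht]
  rw [hasDerivAt_iff_tendsto_slope]
  refine (hG.tendsto' 0 _ (by simp [G])).mono_left nhdsWithin_le_nhds |>.congr' ?_
  filter_upwards [self_mem_nhdsWithin] with t ht
  exact (hslope t ht).symm

theorem HasDerivAt.normedSpace_exp {f : ℝ → 𝔸} {f' : 𝔸} {t : ℝ} (hf : HasDerivAt f f' t) :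
    HasDerivAt (fun u => NormedSpace.exp (f u)) (∫ α in (0 : ℝ)..1,
      NormedSpace.exp (α • f t) * f' * NormedSpace.exp ((1 - α) • f t)) t := by
  have hexp : HasFDerivAt NormedSpace.exp (fderiv ℝ NormedSpace.exp (f t)) (f t) :=
    (exp_analytic (f t)).differentiableAt.hasFDerivAt
  have hline : HasDerivAt (fun u : ℝ => NormedSpace.exp (f t + u • f'))
      (fderiv ℝ NormedSpace.exp (f t) f') 0 := by
    have hcurve : HasDerivAt (fun u : ℝ => f t + u • f') f' 0 := by
      simpa using ((hasDerivAt_id (0 : ℝ)).smul_const f').const_add (f t)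
    exact hexp.comp_hasDerivAt_of_eq (0 : ℝ) hcurve (by simp)
  rw [(hasDerivAt_exp_add_smul (f t) f').unique hline]
  exact hexp.comp_hasDerivAt t hf

end Duhamel

section DerivationBlock

variable {d q N : ℕ} (s : Fin d) (Δ : Mat N) (X : Fin d → Mat N) (A : Fin q → Mat N)

theorem dSharpAux_eq_fromBlocks (P : FreeAlgebra ℂ (Fin d ⊕ Fin q)) :
    dSharpAux s Δ X A P
      = Matrix.fromBlocks (evalPoly X A P) (dSharp s Δ X A P) 0 (evalPoly X A P) := by
  unfold dSharp
  induction P using FreeAlgebra.induction with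
  | grade0 r =>
    ext (i | i) (j | j) <;> simp [Matrix.algebraMap_matrix_apply, Matrix.toBlocks₁₂]
  | grade1 v => simp [dSharpAux, evalPoly, Matrix.toBlocks_fromBlocks₁₂]
  | mul a b ha hb =>
    rw [map_mul, map_mul, ha, hb, Matrix.fromBlocks_multiply]
    simp [Matrix.toBlocks_fromBlocks₁₂]
  | add a b ha hb =>
    rw [map_add, map_add, ha, hb, Matrix.fromBlocks_add]
    ext (i | i) (j | j) <;> simp [Matrix.toBlocks₁₂]

theorem dSharp_algebraMap (r : ℂ) : dSharp s Δ X A (algebraMap ℂ _ r) = 0 := by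
  ext i j
  simp [dSharp, Matrix.toBlocks₁₂, Matrix.algebraMap_matrix_apply]

theorem dSharp_ι (v : Fin d ⊕ Fin q) :
    dSharp s Δ X A (FreeAlgebra.ι ℂ v) = if v = Sum.inl s then Δ else 0 := by
  simp [dSharp, dSharpAux, Matrix.toBlocks_fromBlocks₁₂]

theorem dSharp_add (a b : FreeAlgebra ℂ (Fin d ⊕ Fin q)) :
    dSharp s Δ X A (a + b) = dSharp s Δ X A a + dSharp s Δ X A b := by
  ext i j
  simp [dSharp, Matrix.toBlocks₁₂]

theorem dSharp_mul (a b : FreeAlgebra ℂ (Fin d ⊕ Fin q)) :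
    dSharp s Δ X A (a * b)
      = evalPoly X A a * dSharp s Δ X A b + dSharp s Δ X A a * evalPoly X A b := by
  have h := congrArg Matrix.toBlocks₁₂ (dSharpAux_eq_fromBlocks s Δ X A (a * b))
  rw [map_mul, dSharpAux_eq_fromBlocks, dSharpAux_eq_fromBlocks, Matrix.fromBlocks_multiply,
    Matrix.toBlocks_fromBlocks₁₂, Matrix.toBlocks_fromBlocks₁₂] at h
  simpa using h.symm

end DerivationBlock

section MatrixNorm

-- Any Banach-algebra norm would do: the statements below only see the product topology.
attribute [local instance] Matrix.linftyOpNormedAddCommGroup Matrix.linftyOpNormedSpace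
  Matrix.linftyOpNormedRing Matrix.linftyOpNormedAlgebra

theorem HasDerivAt.matrix_apply {m n : Type*} [Fintype m] [Fintype n] {f : ℝ → Matrix m n ℂ}
    {f' : Matrix m n ℂ} {t : ℝ} (hf : HasDerivAt f f' t) (i : m) (j : n) :
    HasDerivAt (fun u => f u i j) (f' i j) t :=
  (Matrix.entryLinearMap ℝ ℂ i j).toContinuousLinearMap.hasFDerivAt.comp_hasDerivAt t hf

theorem mIntegral_eq_intervalIntegral {ι : Type} [Fintype ι] {f : ℝ → Matrix ι ι ℂ}
    (hf : Continuous f) :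
    mIntegral f = ∫ α in (0 : ℝ)..1, f α := by
  ext i j
  refine (Matrix.entryLinearMap ℝ ℂ i j).toContinuousLinearMap.intervalIntegral_comp_comm ?_
  apply Continuous.intervalIntegrable
  exact hf

theorem HasDerivAt.matrix_exp {ι : Type} [Fintype ι] [DecidableEq ι] {f : ℝ → Matrix ι ι ℂ}
    {f' : Matrix ι ι ℂ} {t : ℝ} (hf : HasDerivAt f f' t) :
    HasDerivAt (fun u => NormedSpace.exp (f u))
      (mIntegral fun α => NormedSpace.exp (α • f t) * f' * NormedSpace.exp ((1 - α) • f t)) t := by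
  rw [mIntegral_eq_intervalIntegral (by fun_prop)]
  exact hf.normedSpace_exp

theorem hasDerivAt_evalPoly_update {d q N : ℕ} (s : Fin d) (Δ : Mat N) (X : Fin d → Mat N)
    (A : Fin q → Mat N) (P : FreeAlgebra ℂ (Fin d ⊕ Fin q)) :
    HasDerivAt (fun u : ℝ => evalPoly (Function.update X s (X s + (u : ℂ) • Δ)) A P)
      (dSharp s Δ X A P) 0 := by
  induction P using FreeAlgebra.induction with
  | grade0 r =>
    simp only [AlgHom.commutes, dSharp_algebraMap]
    exact hasDerivAt_const 0 _
  | grade1 v =>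
    simp only [evalPoly, FreeAlgebra.lift_ι_apply, dSharp_ι]
    rcases v with t | k
    · rcases eq_or_ne t s with rfl | hts
      · have h := ((hasDerivAt_id (0 : ℝ)).ofReal_comp.smul_const Δ).const_add (X t)
        simp only [id, Complex.ofReal_one, one_smul] at h
        simp only [Sum.elim_inl, Function.update_self, if_true]
        exact h
      · simp only [Sum.elim_inl, Function.update_of_ne hts, Sum.inl.injEq, hts, if_false]
        exact hasDerivAt_const 0 _
    · simp only [Sum.elim_inr, reduceCtorEq, if_false]
      exact hasDerivAt_const 0 _
  | mul a b ha hb =>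
    have h := ha.mul hb
    simp only [Complex.ofReal_zero, zero_smul, add_zero, Function.update_eq_self] at h
    rw [dSharp_mul, add_comm]
    simp only [map_mul]
    exact h
  | add a b ha hb =>
    simp only [map_add, dSharp_add]
    exact ha.add hb

theorem hasDerivAt_exp_poly_general
    (d q N : ℕ)
    (P : FreeAlgebra ℂ (Fin d ⊕ Fin q))
    (X : Fin d → Mat N)
    (A : Fin q → Mat N)
    (s : Fin d) (Δ : Mat N) :
    ∀ i j : Fin N, HasDerivAt
      (fun u : ℝ =>
        NormedSpace.exp
          (Complex.I • evalPoly (Function.update X s (X s + (u : ℂ) • Δ)) A P) i j)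
      ((Complex.I • mIntegral fun α =>
        NormedSpace.exp ((Complex.I * (α : ℂ)) • evalPoly X A P) * dSharp s Δ X A P *
          NormedSpace.exp ((Complex.I * (1 - (α : ℂ))) • evalPoly X A P)) i j)
      0 := by
  intro i j
  have hcurve : HasDerivAt
      (fun u : ℝ => Complex.I • evalPoly (Function.update X s (X s + (u : ℂ) • Δ)) A P)
      (Complex.I • dSharp s Δ X A P) 0 :=
    (hasDerivAt_evalPoly_update s Δ X A P).const_smul Complex.I
  have hscalar (r : ℝ) (c : ℂ) (M : Mat N) : r • c • M = (c * r) • M := by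
    rw [← Complex.coe_smul, smul_smul, mul_comm]
  have h := hcurve.matrix_exp.matrix_apply i j
  convert h using 1
  simp only [mIntegral, Matrix.smul_apply, Matrix.of_apply, smul_eq_mul,
    ← intervalIntegral.integral_const_mul]
  refine intervalIntegral.integral_congr fun α _ => ?_
  simp only [Function.update_eq_self, Complex.ofReal_zero, zero_smul, add_zero, hscalar,
    mul_smul_comm, smul_mul_assoc, Matrix.smul_apply, smul_eq_mul, Complex.ofReal_sub,
    Complex.ofReal_one]

/-- Duhamel's formula: the derivative at `u = 0` of
`u ↦ exp(i P(X₁,…,X_s + uΔ,…,X_d, A))` is `i ∫₀¹ e^{iαP(X,A)} (∂_s P(X,A) # Δ) e^{i(1-α)P(X,A)} dα`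
(stated entrywise; the matrix-valued integral is taken entrywise). -/
theorem hasDerivAt_exp_poly
    (d q N : ℕ) (σ : Fin q → Fin q) (hσ : ∀ j, σ (σ j) = j)
    (P : FreeAlgebra ℂ (Fin d ⊕ Fin q)) (hP : polyStar d q σ P = P)
    (X : Fin d → Mat N) (hX : ∀ s, (X s).IsHermitian)
    (A : Fin q → Mat N) (hA : ∀ j, A (σ j) = (A j)ᴴ)
    (s : Fin d) (Δ : Mat N) (hΔ : Δ.IsHermitian) :
    ∀ i j : Fin N, HasDerivAt
      (fun u : ℝ =>
        NormedSpace.exp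
          (Complex.I • evalPoly (Function.update X s (X s + (u : ℂ) • Δ)) A P) i j)
      ((Complex.I • mIntegral fun α =>
        NormedSpace.exp ((Complex.I * (α : ℂ)) • evalPoly X A P) * dSharp s Δ X A P *
          NormedSpace.exp ((Complex.I * (1 - (α : ℂ))) • evalPoly X A P)) i j)
      0 :=
  hasDerivAt_exp_poly_general d q N P X A s Δ

end MatrixNorm
end
end

section
/- Let N ≥ 1, let A, B, C be N×N complex matrices, and let g ∈ {0,1,2,3} be such that at least g of the three matrices A, B, C have rank at most 1. Then Σ_{1≤i,j≤N} |A_{i,i}·B_{j,j}·C_{i,j}| ≤ N^{(3−g)/2} · ‖A‖·‖B‖·‖C‖, where ‖·‖ denotes the matrix operator norm (largest singular value). -/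
open MeasureTheory ProbabilityTheory Matrix Asymptotics
open scoped ENNReal NNReal Kronecker ProbabilityTheory

noncomputable section

/-- The operator norm of a matrix, acting on the Euclidean space `ℂ^N`. -/
def opNorm {N : ℕ} (M : Mat N) : ℝ := ‖Matrix.toEuclideanCLM (𝕜 := ℂ) M‖

/-!
Put `a_i = |A_ii|`, `b_j = |B_jj|` and write `‖M‖_F` for the Frobenius norm. Cauchy–Schwarz over
the pairs `(i, j)` bounds the sum by `‖a‖₂ ‖b‖₂ ‖C‖_F ≤ ‖A‖_F ‖B‖_F ‖C‖_F`. Every column of `M`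
has Euclidean norm at most `‖M‖`, so `‖M‖_F ≤ √N ‖M‖`; if `M` has rank at most one then
`M = u vᵀ` and `‖M‖_F = ‖u‖ ‖v‖ = ‖M‖`. So each factor of rank at most one saves a factor `√N`.
-/

theorem sum_sum_mul_mul_sq_le {ι κ : Type*} [Fintype ι] [Fintype κ]
    (a : ι → ℝ) (b : κ → ℝ) (c : ι → κ → ℝ) :
    (∑ i, ∑ j, a i * b j * c i j) ^ 2 ≤
      (∑ i, a i ^ 2) * (∑ j, b j ^ 2) * ∑ i, ∑ j, c i j ^ 2 := by
  have h := Finset.sum_mul_sq_le_sq_mul_sq Finset.univ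
    (fun p : ι × κ => a p.1 * b p.2) (fun p => c p.1 p.2)
  simp only [← Finset.univ_product_univ, Finset.sum_product, mul_pow] at h
  rwa [Finset.sum_mul_sum]

theorem le_rpow_mul_of_sq_le_pow_mul_sq {x S P t : ℝ} {k : ℕ} (hx : 1 ≤ x) (hP : 0 ≤ P)
    (hk : (k : ℝ) ≤ t) (h : S ^ 2 ≤ x ^ k * P ^ 2) : S ≤ x ^ (t / 2) * P := by
  have hsq : S ^ 2 ≤ (x ^ (t / 2) * P) ^ 2 := by
    rw [mul_pow, ← Real.rpow_natCast (x ^ (t / 2)), ← Real.rpow_mul (by linarith)]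
    calc S ^ 2 ≤ x ^ k * P ^ 2 := h
      _ ≤ x ^ (t / 2 * ((2 : ℕ) : ℝ)) * P ^ 2 := by
        gcongr
        rw [← Real.rpow_natCast]
        exact Real.rpow_le_rpow_of_exponent_le hx (by push_cast; linarith)
  exact (abs_le_of_sq_le_sq' hsq (by positivity)).2

open scoped Matrix.Norms.L2Operator

namespace Matrix

theorem exists_eq_vecMulVec_of_rank_le_one {K m n : Type*} [Field K] [Fintype n]
    (M : Matrix m n K) (h : M.rank ≤ 1) : ∃ u v, M = vecMulVec u v := by
  classical
  obtain ⟨u, hu⟩ := (Submodule.finrank_le_one_iff_isPrincipal _).mp h |>.principal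
  have hcol : ∀ j, ∃ c : K, Mᵀ j = c • u := fun j => by
    have : Mᵀ j ∈ LinearMap.range M.mulVecLin := ⟨Pi.single j 1, by ext; simp⟩
    rw [hu, Submodule.mem_span_singleton] at this
    exact this.imp fun _ => Eq.symm
  choose v hv using hcol
  exact ⟨u, v, by ext i j; simpa [vecMulVec_apply, mul_comm] using congrFun (hv j) i⟩

theorem sum_norm_sq_diag_le {n α : Type*} [Fintype n] [SeminormedAddGroup α]
    (M : Matrix n n α) : ∑ i, ‖M i i‖ ^ 2 ≤ ∑ i, ∑ j, ‖M i j‖ ^ 2 :=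
  Finset.sum_le_sum fun i _ =>
    Finset.single_le_sum (f := fun j => ‖M i j‖ ^ 2) (fun _ _ => sq_nonneg _) (Finset.mem_univ i)

theorem sum_sum_norm_diag_mul_diag_mul_sq_le {n 𝕜 : Type*} [Fintype n] [RCLike 𝕜]
    (A B C : Matrix n n 𝕜) :
    (∑ i, ∑ j, ‖A i i * B j j * C i j‖) ^ 2 ≤
      (∑ i, ∑ j, ‖A i j‖ ^ 2) * (∑ i, ∑ j, ‖B i j‖ ^ 2) * ∑ i, ∑ j, ‖C i j‖ ^ 2 := by
  simp only [norm_mul]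
  calc _ ≤ (∑ i, ‖A i i‖ ^ 2) * (∑ j, ‖B j j‖ ^ 2) * ∑ i, ∑ j, ‖C i j‖ ^ 2 :=
        sum_sum_mul_mul_sq_le _ _ _
    _ ≤ _ := by gcongr ?_ * ?_ * _ <;> exact sum_norm_sq_diag_le _

variable {𝕜 m n : Type*} [RCLike 𝕜] [Fintype m] [Fintype n] [DecidableEq n]

theorem sum_norm_sq_col_le_l2_opNorm_sq (M : Matrix m n 𝕜) (j : n) :
    ∑ i, ‖M i j‖ ^ 2 ≤ ‖M‖ ^ 2 := by
  have h := M.l2_opNorm_mulVec (EuclideanSpace.single j 1)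
  rw [PiLp.norm_single, norm_one, mul_one, EuclideanSpace.norm_eq] at h
  rw [← Real.sqrt_le_left (norm_nonneg M)]
  simpa using h

theorem sum_sum_norm_sq_le_card_mul_l2_opNorm_sq (M : Matrix m n 𝕜) :
    ∑ i, ∑ j, ‖M i j‖ ^ 2 ≤ Fintype.card n * ‖M‖ ^ 2 := by
  rw [Finset.sum_comm]
  simpa using Finset.sum_le_sum fun j (_ : j ∈ Finset.univ) =>
    M.sum_norm_sq_col_le_l2_opNorm_sq j

theorem l2_opNorm_vecMulVec_star (x : EuclideanSpace 𝕜 m) (y : EuclideanSpace 𝕜 n) :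
    ‖vecMulVec x (star y)‖ = ‖x‖ * ‖y‖ := by
  rw [← InnerProductSpace.symm_toEuclideanLin_rankOne, l2_opNorm_def, LinearEquiv.trans_apply,
    LinearEquiv.apply_symm_apply, ← InnerProductSpace.norm_rankOne (𝕜 := 𝕜) x y]
  rfl

theorem sum_sum_norm_sq_vecMulVec (u : m → 𝕜) (v : n → 𝕜) :
    ∑ i, ∑ j, ‖vecMulVec u v i j‖ ^ 2 = ‖vecMulVec u v‖ ^ 2 := by
  have h := l2_opNorm_vecMulVec_star (WithLp.toLp 2 u) (WithLp.toLp 2 (star v))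
  simp only [star_star] at h
  rw [h, mul_pow, EuclideanSpace.norm_sq_eq, EuclideanSpace.norm_sq_eq, Finset.sum_mul_sum]
  simp [vecMulVec_apply, mul_pow]

theorem sum_sum_norm_sq_eq_l2_opNorm_sq_of_rank_le_one (M : Matrix m n 𝕜) (h : M.rank ≤ 1) :
    ∑ i, ∑ j, ‖M i j‖ ^ 2 = ‖M‖ ^ 2 := by
  obtain ⟨u, v, rfl⟩ := M.exists_eq_vecMulVec_of_rank_le_one h
  exact sum_sum_norm_sq_vecMulVec u v

end Matrix

theorem sum_sum_norm_sq_le_pow_mul_opNorm_sq {N : ℕ} (M : Mat N) :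
    ∑ i, ∑ j, ‖M i j‖ ^ 2 ≤ (N : ℝ) ^ (if M.rank ≤ 1 then 0 else 1) * opNorm M ^ 2 := by
  rw [opNorm, l2_opNorm_toEuclideanCLM]
  split_ifs with h
  · simpa using (M.sum_sum_norm_sq_eq_l2_opNorm_sq_of_rank_le_one h).le
  · simpa using M.sum_sum_norm_sq_le_card_mul_l2_opNorm_sq

theorem entry_sum_diag_bound_general
    (N : ℕ) (hN : 1 ≤ N) (A B C : Mat N) (g : ℕ)
    (hr : g ≤ (Finset.univ.filter fun i : Fin 3 => (![A, B, C] i).rank ≤ 1).card) :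
    ∑ i : Fin N, ∑ j : Fin N, ‖A i i * B j j * C i j‖ ≤
      (N : ℝ) ^ (((3 : ℝ) - g) / 2) * (opNorm A * opNorm B * opNorm C) := by
  set e : Mat N → ℕ := fun M => if M.rank ≤ 1 then 0 else 1
  have he : e A + e B + e C + g ≤ 3 := by
    rw [Finset.card_filter, Fin.sum_univ_three] at hr
    by_cases hA : A.rank ≤ 1 <;> by_cases hB : B.rank ≤ 1 <;> by_cases hC : C.rank ≤ 1 <;>
      simp [e, hA, hB, hC] at hr ⊢ <;> omega
  refine le_rpow_mul_of_sq_le_pow_mul_sq (k := e A + e B + e C) (mod_cast hN)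
    (by simp only [opNorm]; positivity) (by rw [le_sub_iff_add_le]; exact_mod_cast he) ?_
  calc _ ≤ (∑ i, ∑ j, ‖A i j‖ ^ 2) * (∑ i, ∑ j, ‖B i j‖ ^ 2) * ∑ i, ∑ j, ‖C i j‖ ^ 2 :=
        sum_sum_norm_diag_mul_diag_mul_sq_le A B C
    _ ≤ ((N : ℝ) ^ e A * opNorm A ^ 2) * ((N : ℝ) ^ e B * opNorm B ^ 2) *
          ((N : ℝ) ^ e C * opNorm C ^ 2) := by
        gcongr <;> exact sum_sum_norm_sq_le_pow_mul_opNorm_sq _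
    _ = _ := by ring

/-- If at least `g` of the matrices `A, B, C` have rank at most one, then
`∑_{i,j} |A_{ii} B_{jj} C_{ij}| ≤ N^{(3-g)/2} ‖A‖ ‖B‖ ‖C‖`. -/
theorem entry_sum_diag_bound
    (N : ℕ) (hN : 1 ≤ N) (A B C : Mat N) (g : ℕ) (hg : g ≤ 3)
    (hr : g ≤ (Finset.univ.filter fun i : Fin 3 => (![A, B, C] i).rank ≤ 1).card) :
    ∑ i : Fin N, ∑ j : Fin N, ‖A i i * B j j * C i j‖ ≤
      (N : ℝ) ^ (((3 : ℝ) - g) / 2) * (opNorm A * opNorm B * opNorm C) :=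
  entry_sum_diag_bound_general N hN A B C g hr

end
end
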